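/- arXiv:2306.09292 — 3 statements merged into one kernel-verified Lean document; each statement's English description precedes it below -/
import Mathlib

section
/- Let U be the K-qubit key unitary built from CNOT gates (as in the qubit convolution construction). Then U X_1 U† = ∏_{i=1}^K X_i, and for i ≥ 2, U X_i U† = X_1 X_i; also U Z_1 U† = ∏_{i=1}^K Z_i, and for i ≥ 2, U Z_i U† = Z_{i^c}, where Z_{i^c} = Z_1 Z_2···Z_{i-1} I_i Z_{i+1}···Z_K. -/
open Matrix Finset

/-- The controlled-NOT gate on `K` qubits with control `a` and target `b`
(`CNOT_{a→a}` is taken to be the identity). -/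
def CNOT {K : ℕ} (a b : Fin K) : Matrix (Fin K → ZMod 2) (Fin K → ZMod 2) ℂ :=
  if a = b then 1
  else Matrix.of fun x y =>
    if x = Function.update y b (y b + y a) then 1 else 0

/-- The `K`-qubit key unitary `U = (∏_{j=1}^K CNOT_{j→1}) (∏_{i=1}^K CNOT_{1→i})`,
with qubit `1` represented by the index `0 : Fin K`. -/
noncomputable def keyGate (K : ℕ) [NeZero K] :
    Matrix (Fin K → ZMod 2) (Fin K → ZMod 2) ℂ :=
  (List.ofFn fun j : Fin K => CNOT j 0).prod *
    (List.ofFn fun i : Fin K => CNOT 0 i).prod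

/-- Pauli `X` acting on qubit `i` of `K` qubits. -/
def XOp {K : ℕ} (i : Fin K) : Matrix (Fin K → ZMod 2) (Fin K → ZMod 2) ℂ :=
  Matrix.of fun x y => if x = Function.update y i (y i + 1) then 1 else 0

/-- Pauli `Z` acting on qubit `i` of `K` qubits. -/
def ZOp {K : ℕ} (i : Fin K) : Matrix (Fin K → ZMod 2) (Fin K → ZMod 2) ℂ :=
  Matrix.of fun x y => if x = y then (-1 : ℂ) ^ (y i).val else 0

namespace KeyGateAux

abbrev V (K : ℕ) := Fin K → ZMod 2

lemma z2_add_self (x : ZMod 2) : x + x = 0 := by revert x; decide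

lemma neg_one_pow_add (a b : ZMod 2) :
    ((-1:ℂ))^((a+b).val) = (-1)^a.val * (-1)^b.val := by
  have h0 : ((0:ZMod 2)).val = 0 := rfl
  have h1 : ((1:ZMod 2)).val = 1 := rfl
  have h2 : ((1:ZMod 2)+1).val = 0 := rfl
  rcases (show a = 0 ∨ a = 1 by revert a; decide) with rfl | rfl <;>
  rcases (show b = 0 ∨ b = 1 by revert b; decide) with rfl | rfl <;>
  simp only [h0, h1, h2, add_zero, zero_add] <;> norm_num

variable {K : ℕ} [NeZero K]

noncomputable def PD (f : V K → V K) (g : V K → ZMod 2) :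
    Matrix (V K) (V K) ℂ :=
  Matrix.of fun x y => if x = f y then (-1:ℂ)^(g y).val else 0

lemma PD_congr {f f' : V K → V K} {g g' : V K → ZMod 2}
    (hf : f = f') (hg : g = g') : PD f g = PD f' g' := by rw [hf, hg]

lemma PD_mul (f f' : V K → V K) (g g' : V K → ZMod 2) :
    PD f g * PD f' g' = PD (f ∘ f') (fun y => g (f' y) + g' y) := by
  ext x z
  rw [Matrix.mul_apply]
  rw [Finset.sum_eq_single (f' z)]
  · simp only [PD, Matrix.of_apply, Function.comp_apply, if_pos rfl, neg_one_pow_add]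
    by_cases h : x = f (f' z) <;> simp [h]
  · intro y _ hy
    simp [PD, hy]
  · intro h; exact absurd (Finset.mem_univ _) h

lemma PD_one : PD (id : V K → V K) 0 = 1 := by
  ext x y
  simp [PD, Matrix.one_apply]

lemma PD_mul0 (f f' : V K → V K) :
    PD f 0 * PD f' 0 = PD (f ∘ f') 0 := by
  rw [PD_mul]
  exact PD_congr rfl (by funext y; simp)

lemma PD_conjT (e : V K ≃ V K) : (PD (⇑e) 0)ᴴ = PD (⇑e.symm) 0 := by
  ext x y
  simp only [PD, conjTranspose_apply, Matrix.of_apply, Pi.zero_apply]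
  have hiff : (y = e x) ↔ (x = e.symm y) := by
    constructor <;> intro h <;> simp [h]
  by_cases h : x = e.symm y
  · rw [if_pos (hiff.mpr h), if_pos h]; simp
  · rw [if_neg (fun hh => h (hiff.mp hh)), if_neg h]; simp

lemma PD_conj_move (e : V K ≃ V K) (f τ : V K → V K)
    (h : (⇑e) ∘ f = τ ∘ ⇑e) :
    PD (⇑e) 0 * PD f 0 * PD (⇑e.symm) 0 = PD τ 0 := by
  rw [PD_mul0, PD_mul0]
  refine PD_congr ?_ rfl
  calc (⇑e ∘ f) ∘ ⇑e.symm = (τ ∘ ⇑e) ∘ ⇑e.symm := by rw [h]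
    _ = τ := by rw [Function.comp_assoc, Equiv.self_comp_symm, Function.comp_id]

lemma PD_conjZ (e : V K ≃ V K) (g : V K → ZMod 2) :
    PD (⇑e) 0 * PD id g * PD (⇑e.symm) 0 = PD id (fun y => g (e.symm y)) := by
  rw [PD_mul, PD_mul]
  refine PD_congr ?_ ?_
  · funext y; simp
  · funext y; simp

def flipF (i : Fin K) : V K → V K := fun y => Function.update y i (y i + 1)

def cnotF (a b : Fin K) : V K → V K :=
  fun y => if a = b then y else Function.update y b (y b + y a)

lemma CNOT_eq (a b : Fin K) : CNOT a b = PD (cnotF a b) 0 := by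
  rcases eq_or_ne a b with h | h
  · subst h
    have hc : cnotF a a = id := by funext y; simp [cnotF]
    rw [hc, PD_one, CNOT, if_pos rfl]
  · ext x y
    simp [CNOT, cnotF, if_neg h, PD]

lemma XOp_eq (i : Fin K) : XOp i = PD (flipF i) 0 := by
  ext x y; simp [XOp, flipF, PD]

lemma ZOp_eq (i : Fin K) : ZOp i = PD id (fun y => y i) := by
  ext x y; simp [ZOp, PD]

lemma L1 (l : List (Fin K)) (hl : l.Nodup) :
    (l.map fun i => PD (cnotF 0 i) (0 : V K → ZMod 2)).prod
      = PD (fun y j => if j ∈ l ∧ j ≠ 0 then y j + y 0 else y j) 0 := by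
  induction l with
  | nil =>
      rw [List.map_nil, List.prod_nil, ← PD_one]
      refine (PD_congr ?_ rfl).symm
      funext y j; simp
  | cons i t ih =>
      obtain ⟨hit, ht⟩ := List.nodup_cons.mp hl
      rw [List.map_cons, List.prod_cons, ih ht, PD_mul0]
      refine PD_congr ?_ rfl
      funext y j
      simp only [Function.comp_apply]
      by_cases hi : (0 : Fin K) = i
      · subst hi
        simp only [cnotF, if_pos rfl]
        by_cases hj : j = 0
        · subst hj; simp
        · by_cases hjt : j ∈ t
          · simp [hjt, hj]
          · have hnm : ¬ (j ∈ (0 : Fin K) :: t ∧ j ≠ 0) := by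
              rintro ⟨hm, _⟩
              rcases List.mem_cons.mp hm with h | h
              · exact hj h
              · exact hjt h
            simp only [hnm, if_false]
            simp [hjt]
      · simp only [cnotF, if_neg hi]
        by_cases hj : j = i
        · subst hj
          rw [Function.update_self]
          have hmem : j ∈ j :: t ∧ j ≠ 0 := ⟨List.mem_cons_self (a := j) (l := t), Ne.symm hi⟩
          rw [if_pos hmem]
          simp [hit, Ne.symm hi]
        · rw [Function.update_of_ne hj]
          by_cases hj0 : j = 0
          · subst hj0; simp
          · by_cases hjt : j ∈ t
            · have : j ∈ i :: t ∧ j ≠ 0 := ⟨List.mem_cons_of_mem _ hjt, hj0⟩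
              simp [hjt, hj0, this]
            · have hnm : ¬ (j ∈ i :: t ∧ j ≠ 0) := by
                rintro ⟨hm, _⟩
                rcases List.mem_cons.mp hm with h | h
                · exact hj h
                · exact hjt h
              simp only [hnm, if_false]
              simp [hjt, hj0]

lemma L2 (l : List (Fin K)) :
    (l.map fun j => PD (cnotF j 0) (0 : V K → ZMod 2)).prod
      = PD (fun y j => if j = 0 then
            y 0 + (l.map fun i => if i = 0 then 0 else y i).sum else y j) 0 := by
  induction l with
  | nil =>
      rw [List.map_nil, List.prod_nil, ← PD_one]
      refine (PD_congr ?_ rfl).symm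
      funext y j
      by_cases hj : j = 0 <;> simp [hj]
  | cons i t ih =>
      rw [List.map_cons, List.prod_cons, ih, PD_mul0]
      refine PD_congr ?_ rfl
      funext y j
      simp only [Function.comp_apply]
      by_cases hi : i = 0
      · subst hi
        simp only [cnotF, if_pos rfl, List.map_cons, List.sum_cons, if_pos rfl, zero_add,
          if_true]
      · simp only [cnotF, if_neg hi]
        by_cases hj : j = 0
        · subst hj
          rw [Function.update_self]
          simp only [List.map_cons, List.sum_cons, if_neg hi, if_pos rfl, hi, if_false,
            if_true]
          ring
        · rw [Function.update_of_ne hj]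
          simp [hj]

lemma L3 (l : List (Fin K)) (hl : l.Nodup) :
    (l.map fun i => PD (flipF i) (0 : V K → ZMod 2)).prod
      = PD (fun y j => if j ∈ l then y j + 1 else y j) 0 := by
  induction l with
  | nil =>
      rw [List.map_nil, List.prod_nil, ← PD_one]
      refine (PD_congr ?_ rfl).symm
      funext y j; simp
  | cons i t ih =>
      obtain ⟨hit, ht⟩ := List.nodup_cons.mp hl
      rw [List.map_cons, List.prod_cons, ih ht, PD_mul0]
      refine PD_congr ?_ rfl
      funext y j
      simp only [Function.comp_apply, flipF]
      by_cases hj : j = i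
      · subst hj
        rw [Function.update_self]
        simp [hit]
      · rw [Function.update_of_ne hj]
        by_cases hjt : j ∈ t
        · simp [hjt, List.mem_cons, hj]
        · have hnm : ¬ j ∈ i :: t := by
            intro hm
            rcases List.mem_cons.mp hm with h | h
            · exact hj h
            · exact hjt h
          simp [hjt, hnm]

lemma L4 (l : List (V K → ZMod 2)) :
    (l.map fun g => PD id g).prod = PD id (fun y => (l.map fun g => g y).sum) := by
  induction l with
  | nil =>
      rw [List.map_nil, List.prod_nil, ← PD_one]
      exact (PD_congr rfl (by funext y; simp)).symm
  | cons g t ih =>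
      rw [List.map_cons, List.prod_cons, ih, PD_mul]
      exact PD_congr rfl rfl

lemma sum_ite_pivot (b : Fin K) (a : ZMod 2) (f : Fin K → ZMod 2) :
    ∑ j, (if j = b then a else f j) = a + f b + ∑ j, f j := by
  have h1 : ∀ j, (if j = b then a else f j) = (if j = b then a + f b else 0) + f j := by
    intro j
    by_cases h : j = b
    · subst h; rw [if_pos rfl, if_pos rfl, add_assoc, z2_add_self, add_zero]
    · simp [h]
  simp_rw [h1]
  rw [Finset.sum_add_distrib, Finset.sum_ite_eq' Finset.univ b (fun _ => a + f b)]
  simp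

lemma sum_const_odd (hK : Odd K) (c : ZMod 2) : ∑ _j : Fin K, c = c := by
  rw [Finset.sum_const, Finset.card_univ, Fintype.card_fin, nsmul_eq_mul]
  obtain ⟨m, hm⟩ := hK
  subst hm
  push_cast
  have h2 : (2 : ZMod 2) = 0 := rfl
  rw [h2]
  ring

def ksig : V K → V K := fun y j => if j = 0 then ∑ k, y k else y j + y 0

def ksig' : V K → V K := fun y j => if j = 0 then ∑ k, y k else y j + ∑ k, y k

lemma c2a (s b : ZMod 2) : s + (b + b) + (s + b) = b := by revert s b; decide
lemma c2b (s b : ZMod 2) : s + (b + s) + (s + s) = b := by revert s b; decide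

lemma sum_ksig (hK : Odd K) (y : V K) : ∑ j, ksig y j = y 0 := by
  show (∑ j, if j = 0 then ∑ k, y k else y j + y 0) = y 0
  rw [sum_ite_pivot, Finset.sum_add_distrib, sum_const_odd hK]
  exact c2a _ _

lemma sum_ksig' (hK : Odd K) (z : V K) : ∑ j, ksig' z j = z 0 := by
  show (∑ j, if j = 0 then ∑ k, z k else z j + ∑ k, z k) = z 0
  rw [sum_ite_pivot, Finset.sum_add_distrib, sum_const_odd hK]
  exact c2b _ _

def kEquiv (hK : Odd K) : V K ≃ V K where
  toFun := ksig
  invFun := ksig'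
  left_inv := by
    intro y
    funext j
    by_cases hj : j = 0
    · subst hj
      show ksig' (ksig y) 0 = y 0
      simp only [ksig', if_pos rfl]
      exact sum_ksig hK y
    · show ksig' (ksig y) j = y j
      simp only [ksig', if_neg hj]
      rw [sum_ksig hK y]
      show (if j = 0 then ∑ k, y k else y j + y 0) + y 0 = y j
      rw [if_neg hj, add_assoc, z2_add_self, add_zero]
  right_inv := by
    intro z
    funext j
    by_cases hj : j = 0
    · subst hj
      show ksig (ksig' z) 0 = z 0
      simp only [ksig, if_pos rfl]
      exact sum_ksig' hK z
    · show ksig (ksig' z) j = z j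
      simp only [ksig, if_neg hj]
      have h0 : ksig' z 0 = ∑ k, z k := by simp [ksig']
      have hjj : ksig' z j = z j + ∑ k, z k := by simp [ksig', hj]
      rw [h0, hjj, add_assoc, z2_add_self, add_zero]

lemma idlist_nodup : (List.ofFn fun j : Fin K => j).Nodup :=
  List.nodup_ofFn.mpr (fun _ _ h => h)

lemma mem_idlist (j : Fin K) : j ∈ (List.ofFn fun j : Fin K => j) := by
  rw [List.mem_ofFn]; exact ⟨j, rfl⟩

lemma keyGate_eq (hK : Odd K) : keyGate K = PD (⇑(kEquiv hK)) 0 := by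
  have e1 : (List.ofFn fun j : Fin K => CNOT j 0)
      = (List.ofFn fun j : Fin K => j).map fun j => PD (cnotF j 0) 0 := by
    rw [List.map_ofFn]
    congr 1
    funext j
    exact CNOT_eq j 0
  have e2 : (List.ofFn fun i : Fin K => CNOT 0 i)
      = (List.ofFn fun j : Fin K => j).map fun i => PD (cnotF 0 i) 0 := by
    rw [List.map_ofFn]
    congr 1
    funext i
    exact CNOT_eq 0 i
  rw [keyGate, e1, e2, L2, L1 _ idlist_nodup, PD_mul0]
  refine PD_congr ?_ rfl
  funext y j
  simp only [Function.comp_apply]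
  set F1 : V K → V K := fun y j => if j ∈ (List.ofFn fun j : Fin K => j) ∧ j ≠ 0
      then y j + y 0 else y j with hF1
  have hF1e : ∀ y : V K, ∀ j, F1 y j = if j = 0 then y 0 else y j + y 0 := by
    intro y j
    by_cases hj : j = 0
    · simp [hF1, hj]
    · simp [hF1, hj, mem_idlist]
  show (if j = 0 then F1 y 0 +
      ((List.ofFn fun j : Fin K => j).map fun i => if i = 0 then 0 else F1 y i).sum
      else F1 y j) = ksig y j
  have hsum : ((List.ofFn fun j : Fin K => j).map fun i => if i = 0 then 0 else F1 y i).sum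
      = ∑ i, (if i = 0 then 0 else y i + y 0) := by
    rw [List.map_ofFn]
    rw [List.sum_ofFn]
    congr 1
    funext i
    show (if i = 0 then 0 else F1 y i) = (if i = 0 then 0 else y i + y 0)
    by_cases hi : i = 0
    · simp [hi]
    · simp [hi, hF1e]
  by_cases hj : j = 0
  · subst hj
    rw [if_pos rfl, hsum, hF1e]
    simp only [if_pos rfl, ksig]
    rw [sum_ite_pivot, Finset.sum_add_distrib, sum_const_odd hK]
    have : ∀ a s : ZMod 2, a + (0 + (a + a) + (s + a)) = s := by decide
    exact this _ _
  · rw [if_neg hj, hF1e]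
    simp [ksig, hj]

lemma flipF_apply (i : Fin K) (y : V K) (j : Fin K) :
    flipF i y j = if j = i then y i + 1 else y j := by
  simp [flipF, Function.update_apply]

lemma sum_flip (i : Fin K) (y : V K) : ∑ j, flipF i y j = 1 + ∑ j, y j := by
  rw [Finset.sum_congr rfl (fun j _ => flipF_apply i y j), sum_ite_pivot]
  have : ∀ a s : ZMod 2, a + 1 + a + s = 1 + s := by decide
  exact this _ _

lemma coe_kEquiv (hK : Odd K) : ⇑(kEquiv (K := K) hK) = ksig := rfl

lemma coe_kEquiv_symm (hK : Odd K) : ⇑(kEquiv (K := K) hK).symm = ksig' := rfl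

lemma ksig_apply (y : V K) (j : Fin K) :
    ksig y j = if j = 0 then ∑ k, y k else y j + y 0 := rfl

lemma ksig'_apply (y : V K) (j : Fin K) :
    ksig' y j = if j = 0 then ∑ k, y k else y j + ∑ k, y k := rfl

end KeyGateAux

open KeyGateAux

set_option maxHeartbeats 2000000 in
/-- **Conjugation action of the key unitary on Pauli operators:**
`U X₁ U† = ∏ᵢ Xᵢ`; `U Xᵢ U† = X₁ Xᵢ` for `i ≥ 2`; `U Z₁ U† = ∏ᵢ Zᵢ`; and
`U Zᵢ U† = Z_{iᶜ} = Z₁ ⋯ Z_{i-1} Iᵢ Z_{i+1} ⋯ Z_K` for `i ≥ 2`. -/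
theorem keyGate_conj_paulis (K : ℕ) [NeZero K] (hK : Odd K) :
    (keyGate K * XOp (0 : Fin K) * (keyGate K)ᴴ =
        (List.ofFn fun i : Fin K => XOp i).prod) ∧
    (∀ i : Fin K, i ≠ 0 →
        keyGate K * XOp i * (keyGate K)ᴴ = XOp (0 : Fin K) * XOp i) ∧
    (keyGate K * ZOp (0 : Fin K) * (keyGate K)ᴴ =
        (List.ofFn fun i : Fin K => ZOp i).prod) ∧
    (∀ i : Fin K, i ≠ 0 →
        keyGate K * ZOp i * (keyGate K)ᴴ =
          (List.ofFn fun j : Fin K => if j = i then 1 else ZOp j).prod) := by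
  classical
  set e := kEquiv (K := K) hK with he
  have hU : keyGate K = PD (⇑e) 0 := keyGate_eq hK
  have hUH : (keyGate K)ᴴ = PD (⇑e.symm) 0 := by rw [hU]; exact PD_conjT e
  have hes : ⇑e = ksig := rfl
  have hes' : ⇑e.symm = ksig' := rfl
  refine ⟨?_, ?_, ?_, ?_⟩
  · -- X₀
    rw [hUH, hU, XOp_eq]
    have hcomm : (⇑e) ∘ flipF 0 = (fun y j => y j + 1) ∘ ⇑e := by
      rw [hes]
      funext y j
      by_cases hj : j = 0
      · subst hj
        show ksig (flipF 0 y) 0 = ksig y 0 + 1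
        rw [ksig_apply, ksig_apply, if_pos rfl, if_pos rfl, KeyGateAux.sum_flip]
        ring
      · show ksig (flipF 0 y) j = ksig y j + 1
        rw [ksig_apply, ksig_apply, if_neg hj, if_neg hj, flipF_apply, if_neg hj,
          flipF_apply, if_pos rfl]
        try ring
    rw [PD_conj_move e _ _ hcomm]
    have hl : (List.ofFn fun i : Fin K => XOp i)
        = (List.ofFn fun j : Fin K => j).map fun i => PD (flipF i) 0 := by
      rw [List.map_ofFn]
      exact congrArg List.ofFn (funext fun i => XOp_eq i)
    rw [hl, L3 _ idlist_nodup]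
    refine PD_congr ?_ rfl
    funext y j
    simp [mem_idlist]
  · -- Xᵢ, i ≠ 0
    intro i hi
    rw [hUH, hU, XOp_eq, XOp_eq, PD_mul0 (flipF 0) (flipF i)]
    have hcomm : (⇑e) ∘ flipF i = (flipF 0 ∘ flipF i) ∘ ⇑e := by
      rw [hes]
      funext y j
      show ksig (flipF i y) j = flipF 0 (flipF i (ksig y)) j
      by_cases hj : j = 0
      · subst hj
        rw [ksig_apply, if_pos rfl, KeyGateAux.sum_flip]
        simp [flipF_apply, ksig_apply, Ne.symm hi]
        try ring
      · by_cases hji : j = i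
        · subst hji
          simp [flipF_apply, ksig_apply, hj, Ne.symm hj]
          try ring
        · simp [flipF_apply, ksig_apply, hj, hji, Ne.symm hi, Ne.symm hj, Ne.symm hji]
          try ring
    exact PD_conj_move e _ _ hcomm
  · -- Z₀
    rw [hUH, hU, ZOp_eq, PD_conjZ]
    have hl : (List.ofFn fun i : Fin K => ZOp i)
        = (List.ofFn fun i : Fin K => (fun y : V K => y i)).map fun g => PD id g := by
      rw [List.map_ofFn]
      exact congrArg List.ofFn (funext fun i => ZOp_eq i)
    rw [hl, L4]
    refine PD_congr rfl ?_
    funext y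
    rw [hes']
    show ksig' y 0 = _
    rw [ksig'_apply, if_pos rfl, List.map_ofFn, List.sum_ofFn]
    try rfl
  · -- Zᵢ, i ≠ 0
    intro i hi
    rw [hUH, hU, ZOp_eq, PD_conjZ]
    have hterm : ∀ j : Fin K, (if j = i then (1 : Matrix (V K) (V K) ℂ) else ZOp j)
        = PD id (fun y => if j = i then 0 else y j) := by
      intro j
      by_cases hj : j = i
      · rw [if_pos hj, ← PD_one]
        refine PD_congr rfl ?_
        funext y
        simp [hj]
      · rw [if_neg hj, ZOp_eq]
        refine PD_congr rfl ?_
        funext y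
        simp [hj]
    have hl : (List.ofFn fun j : Fin K => if j = i then (1 : Matrix (V K) (V K) ℂ) else ZOp j)
        = (List.ofFn fun j : Fin K => (fun y : V K => if j = i then 0 else y j)).map
            fun g => PD id g := by
      rw [List.map_ofFn]
      exact congrArg List.ofFn (funext fun j => hterm j)
    rw [hl, L4]
    refine PD_congr rfl ?_
    funext y
    rw [hes']
    show ksig' y i = _
    rw [ksig'_apply, if_neg hi, List.map_ofFn, List.sum_ofFn]
    show y i + ∑ k, y k = ∑ j, (if j = i then 0 else y j)
    rw [sum_ite_pivot, zero_add]
end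

section
/- The 3-fold generates all odd convolutions: for K = 2N+1 n-qubit states ρ_1,...,ρ_K, one has ⊠_K(⊗_{i=1}^K ρ_i) = ⊠_3(ρ_1 ⊗ ρ_2 ⊗ ⊠_{K-2}(⊗_{i=3}^K ρ_i)). -/
set_option linter.unusedSectionVars false
set_option maxHeartbeats 1000000

open Matrix Finset
open scoped ComplexOrder

variable {G : Type*} [AddCommGroup G] [Fintype G] [DecidableEq G]

/-- The key unitary of the `(m+1)`-fold qubit convolution, as a permutation of
computational basis labels: `(x₁,…,x_K) ↦ (Σᵢ xᵢ, x₂+x₁, …, x_K+x₁)`. -/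
def keyFun (m : ℕ) (t : Fin (m + 1) → G) : Fin (m + 1) → G :=
  fun i => if i = 0 then ∑ j, t j else t i + t 0

/-- The key unitary `V` (a permutation matrix built from CNOT gates). -/
def keyU (m : ℕ) : Matrix (Fin (m + 1) → G) (Fin (m + 1) → G) ℂ :=
  Matrix.of fun x y => if x = keyFun m y then 1 else 0

/-- The tensor product `ρ₁ ⊗ ⋯ ⊗ ρ_K` of `K = m+1` states. -/
def bigTensor (m : ℕ) (ρ : Fin (m + 1) → Matrix G G ℂ) :
    Matrix (Fin (m + 1) → G) (Fin (m + 1) → G) ℂ :=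
  Matrix.of fun x y => ∏ i, ρ i (x i) (y i)

/-- Partial trace over subsystems `2, …, K`, keeping the first subsystem. -/
noncomputable def ptraceFirst (m : ℕ)
    (M : Matrix (Fin (m + 1) → G) (Fin (m + 1) → G) ℂ) : Matrix G G ℂ :=
  Matrix.of fun a b =>
    ∑ r : {i : Fin (m + 1) // i ≠ 0} → G,
      M (fun i => if h : i = 0 then a else r ⟨i, h⟩)
        (fun i => if h : i = 0 then b else r ⟨i, h⟩)

/-- The `K = m+1`-fold quantum convolution
`⊠_K(ρ₁ ⊗ ⋯ ⊗ ρ_K) = Tr_{2,…,K}(V (ρ₁⊗⋯⊗ρ_K) V†)`. -/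
noncomputable def qconv (m : ℕ) (ρ : Fin (m + 1) → Matrix G G ℂ) : Matrix G G ℂ :=
  ptraceFirst m (keyU m * bigTensor m ρ * (keyU m)ᴴ)

/-- A quantum state: positive semidefinite with unit trace. -/
def IsState (ρ : Matrix G G ℂ) : Prop := ρ.PosSemidef ∧ ρ.trace = 1

/-! ### Auxiliary material -/

/-- The inverse of `keyFun` (for groups of exponent 2 and even `m`). -/
def tauFun (m : ℕ) (x : Fin (m + 1) → G) : Fin (m + 1) → G :=
  fun i => if i = 0 then ∑ j, x j else x i + ∑ j, x j

lemma keyFun_zero (m : ℕ) (t : Fin (m+1) → G) : keyFun m t 0 = ∑ j, t j := if_pos rfl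
lemma keyFun_ne (m : ℕ) (t : Fin (m+1) → G) {i : Fin (m+1)} (h : i ≠ 0) :
    keyFun m t i = t i + t 0 := if_neg h
lemma tauFun_zero (m : ℕ) (x : Fin (m+1) → G) : tauFun m x 0 = ∑ j, x j := if_pos rfl
lemma tauFun_ne (m : ℕ) (x : Fin (m+1) → G) {i : Fin (m+1)} (h : i ≠ 0) :
    tauFun m x i = x i + ∑ j, x j := if_neg h

lemma sum_aux {m : ℕ} (h2 : ∀ x : G, x + x = 0) (hm : 2 ∣ m) (x : Fin (m + 1) → G) (c : G) :
    ((∑ k, x k) + ∑ j : Fin m, (x j.succ + c)) = x 0 := by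
  obtain ⟨k, rfl⟩ := hm
  have hc : (2 * k) • c = 0 := by rw [mul_comm, mul_smul, two_smul, h2, smul_zero]
  rw [Finset.sum_add_distrib, Finset.sum_const, Finset.card_univ, Fintype.card_fin, hc,
    add_zero, Fin.sum_univ_succ x, add_assoc, h2, add_zero]

lemma sum_keyFun {m : ℕ} (h2 : ∀ x : G, x + x = 0) (hm : 2 ∣ m) (t : Fin (m+1) → G) :
    (∑ j, keyFun m t j) = t 0 := by
  rw [Fin.sum_univ_succ, keyFun_zero,
    Finset.sum_congr rfl (fun j _ => keyFun_ne m t (Fin.succ_ne_zero j))]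
  exact sum_aux h2 hm t (t 0)

lemma sum_tauFun {m : ℕ} (h2 : ∀ x : G, x + x = 0) (hm : 2 ∣ m) (x : Fin (m+1) → G) :
    (∑ j, tauFun m x j) = x 0 := by
  rw [Fin.sum_univ_succ, tauFun_zero,
    Finset.sum_congr rfl (fun j _ => tauFun_ne m x (Fin.succ_ne_zero j))]
  exact sum_aux h2 hm x (∑ j, x j)

lemma keyFun_tauFun {m : ℕ} (h2 : ∀ x : G, x + x = 0) (hm : 2 ∣ m) (x : Fin (m+1) → G) :
    keyFun m (tauFun m x) = x := by
  funext i
  rcases eq_or_ne i 0 with rfl | h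
  · rw [keyFun_zero]; exact sum_tauFun h2 hm x
  · rw [keyFun_ne m _ h, tauFun_ne m x h, tauFun_zero, add_assoc, h2, add_zero]

lemma tauFun_keyFun {m : ℕ} (h2 : ∀ x : G, x + x = 0) (hm : 2 ∣ m) (t : Fin (m+1) → G) :
    tauFun m (keyFun m t) = t := by
  funext i
  rcases eq_or_ne i 0 with rfl | h
  · rw [tauFun_zero]; exact sum_keyFun h2 hm t
  · rw [tauFun_ne m _ h, sum_keyFun h2 hm t, keyFun_ne m t h, add_assoc, h2, add_zero]

/-- `keyFun` as an equivalence. -/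
def keyEquiv (m : ℕ) (h2 : ∀ x : G, x + x = 0) (hm : 2 ∣ m) :
    (Fin (m+1) → G) ≃ (Fin (m+1) → G) where
  toFun := keyFun m
  invFun := tauFun m
  left_inv := tauFun_keyFun h2 hm
  right_inv := keyFun_tauFun h2 hm

/-- Splitting off the 0-th coordinate. -/
def splitAt0 (m : ℕ) : (Fin (m+1) → G) ≃ G × ({i : Fin (m+1) // i ≠ 0} → G) where
  toFun u := (u 0, fun p => u p)
  invFun x := fun i => if h : i = 0 then x.1 else x.2 ⟨i, h⟩
  left_inv u := by funext i; by_cases h : i = 0 <;> simp [h]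
  right_inv x := by
    refine Prod.ext (by simp) ?_
    funext p
    simp [p.2]

lemma keyU_conj_apply {m : ℕ} (h2 : ∀ x : G, x + x = 0) (hm : 2 ∣ m)
    (Mx : Matrix (Fin (m+1) → G) (Fin (m+1) → G) ℂ) (x y : Fin (m+1) → G) :
    ((keyU m * Mx * (keyU m)ᴴ : Matrix (Fin (m+1) → G) (Fin (m+1) → G) ℂ) x y)
      = Mx (tauFun m x) (tauFun m y) := by
  have hiff : ∀ z k : Fin (m+1) → G, (z = keyFun m k) ↔ (k = tauFun m z) := fun z k =>
    ⟨fun h => by rw [h, tauFun_keyFun h2 hm], fun h => by rw [h, keyFun_tauFun h2 hm]⟩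
  simp only [Matrix.mul_apply, Matrix.conjTranspose_apply, keyU, Matrix.of_apply]
  simp only [hiff]
  simp only [apply_ite (star : ℂ → ℂ), star_one, star_zero, ite_mul, mul_ite,
    one_mul, mul_one, zero_mul, mul_zero, Finset.sum_ite_eq', Finset.mem_univ, if_true]

lemma sum_dite0 {m : ℕ} (c : G) (r : {i : Fin (m+1) // i ≠ 0} → G) :
    (∑ j, (fun i => if h : i = 0 then c else r ⟨i, h⟩) j)
      = c + ∑ p : {i : Fin (m+1) // i ≠ 0}, r p := by
  rw [← Finset.add_sum_erase Finset.univ _ (Finset.mem_univ (0 : Fin (m+1)))]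
  congr 1
  rw [Finset.sum_subtype (p := fun i : Fin (m+1) => i ≠ 0)
      (Finset.univ.erase (0 : Fin (m+1))) (fun x => by simp)
      (fun i => if h : i = 0 then c else r ⟨i, h⟩)]
  exact Finset.sum_congr rfl fun p _ => dif_neg p.2

/-- The entrywise formula for the convolution (exponent-2 groups, even `m`). -/
lemma qconv_apply_eq {m : ℕ} (h2 : ∀ x : G, x + x = 0) (hm : 2 ∣ m)
    (ρ : Fin (m + 1) → Matrix G G ℂ) (a b : G) :
    qconv m ρ a b
      = ∑ t : Fin (m + 1) → G,
          if (∑ i, t i) = a then ∏ i, ρ i (t i) (t i + (a + b)) else 0 := by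
  have htau : ∀ (r : {i : Fin (m+1) // i ≠ 0} → G) (i : Fin (m+1)),
      tauFun m (fun i => if h : i = 0 then b else r ⟨i,h⟩) i
        = tauFun m (fun i => if h : i = 0 then a else r ⟨i,h⟩) i + (a+b) := by
    intro r i
    have hs : (∑ j, (fun i => if h : i = 0 then b else r ⟨i,h⟩) j)
        = (∑ j, (fun i => if h : i = 0 then a else r ⟨i,h⟩) j) + (a + b) := by
      rw [sum_dite0 a r, sum_dite0 b r,
        show a + (∑ p : {i : Fin (m+1) // i ≠ 0}, r p) + (a + b)
          = (a + a) + (b + ∑ p : {i : Fin (m+1) // i ≠ 0}, r p) from by abel,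
        h2, zero_add]
    rcases eq_or_ne i 0 with rfl | h
    · rw [tauFun_zero, tauFun_zero, hs]
    · rw [tauFun_ne m _ h, tauFun_ne m _ h, hs, ← add_assoc, dif_neg h, dif_neg h]
  have LHSeq : qconv m ρ a b
      = ∑ r : {i : Fin (m+1) // i ≠ 0} → G,
          ∏ i, ρ i (tauFun m ((splitAt0 m).symm (a, r)) i)
            (tauFun m ((splitAt0 m).symm (a, r)) i + (a+b)) := by
    simp only [qconv, ptraceFirst, Matrix.of_apply]
    refine Finset.sum_congr rfl fun r _ => ?_
    rw [keyU_conj_apply h2 hm]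
    simp only [bigTensor, Matrix.of_apply]
    refine Finset.prod_congr rfl fun i _ => ?_
    rw [htau r i]
    rfl
  have RHSeq : (∑ t : Fin (m + 1) → G,
          if (∑ i, t i) = a then ∏ i, ρ i (t i) (t i + (a + b)) else 0)
      = ∑ r : {i : Fin (m+1) // i ≠ 0} → G,
          ∏ i, ρ i (tauFun m ((splitAt0 m).symm (a, r)) i)
            (tauFun m ((splitAt0 m).symm (a, r)) i + (a+b)) := by
    rw [← Equiv.sum_comp (keyEquiv m h2 hm).symm
      (fun t => if (∑ i, t i) = a then ∏ i, ρ i (t i) (t i + (a + b)) else 0)]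
    have hcoe : ⇑(keyEquiv m h2 hm).symm = tauFun m := rfl
    rw [hcoe]
    simp only [sum_tauFun h2 hm]
    rw [← Equiv.sum_comp (splitAt0 m).symm
      (fun u => if u 0 = a then ∏ i, ρ i (tauFun m u i) (tauFun m u i + (a + b)) else 0),
      Fintype.sum_prod_type]
    have h00 : ∀ (c : G) (r : {i : Fin (m+1) // i ≠ 0} → G),
        ((splitAt0 m).symm (c, r)) 0 = c := fun c r => by
      show (if h : (0 : Fin (m+1)) = 0 then c else r ⟨0, h⟩) = c
      exact dif_pos rfl
    simp only [h00]
    rw [Finset.sum_comm]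
    refine Finset.sum_congr rfl fun r _ => ?_
    rw [Finset.sum_ite_eq' Finset.univ a
      (fun c => ∏ i, ρ i (tauFun m ((splitAt0 m).symm (c, r)) i)
        (tauFun m ((splitAt0 m).symm (c, r)) i + (a + b))), if_pos (Finset.mem_univ a)]
  exact LHSeq.trans RHSeq.symm

lemma sum_pi_succ {n : ℕ} (F : (Fin (n+1) → G) → ℂ) :
    ∑ t : Fin (n+1) → G, F t = ∑ x : G, ∑ t : Fin n → G, F (Fin.cons x t) := by
  rw [← Equiv.sum_comp (Fin.consEquiv fun _ => G) F, Fintype.sum_prod_type]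
  rfl

lemma sum_pi_zero (f : (Fin 0 → G) → ℂ) : ∑ e : Fin 0 → G, f e = f finZeroElim := by
  rw [Finset.univ_unique, Finset.sum_singleton]
  exact congrArg f (Subsingleton.elim _ _)

lemma sum_pi_three (F : (Fin (2+1) → G) → ℂ) :
    ∑ s : Fin (2+1) → G, F s
      = ∑ x : G, ∑ y : G, ∑ z : G,
          F (Fin.cons x (Fin.cons y (Fin.cons z finZeroElim))) := by
  rw [sum_pi_succ]
  refine Finset.sum_congr rfl fun x _ => ?_
  rw [sum_pi_succ]
  refine Finset.sum_congr rfl fun y _ => ?_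
  rw [sum_pi_succ]
  exact Finset.sum_congr rfl fun z _ => sum_pi_zero _

lemma collapse (x y aa c : G) (E : ℂ) :
    (∑ z : G, if x + (y + z) = aa then (if c = z then E else 0) else 0)
      = if x + (y + c) = aa then E else 0 := by
  rw [Finset.sum_eq_single c]
  · rw [if_pos rfl]
  · intro z _ hz
    rw [if_neg (show ¬(c = z) from fun h => hz h.symm), ite_self]
  · intro h
    exact absurd (Finset.mem_univ c) h

lemma ite_sum_zero {α : Type*} [Fintype α] (p : Prop) [Decidable p] (f : α → ℂ) :
    (if p then ∑ u : α, f u else 0) = ∑ u : α, if p then f u else 0 := by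
  split
  · rfl
  · exact Finset.sum_const_zero.symm

lemma combin (m : ℕ) (A B : G → ℂ) (P : Fin (m+1) → G → ℂ) (Q : Fin (m+1+1+1) → G → ℂ)
    (hQ0 : ∀ x, Q 0 x = A x) (hQ1 : ∀ x, Q 1 x = B x)
    (hQs : ∀ (i : Fin (m+1)) (x : G), Q i.succ.succ x = P i x) (a : G) :
    (∑ t : Fin (m+1+1+1) → G, if (∑ i, t i) = a then ∏ i, Q i (t i) else 0)
      = ∑ s : Fin (2+1) → G,
          if (∑ i, s i) = a then
            A (s 0) * B (s 1) *
              ∑ u : Fin (m+1) → G, (if (∑ i, u i) = s 2 then ∏ i, P i (u i) else 0)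
          else 0 := by
  have hL : ∀ (x y : G) (u : Fin (m+1) → G),
      (if (∑ i, (Fin.cons x (Fin.cons y u) : Fin (m+1+1+1) → G) i) = a
        then ∏ i, Q i ((Fin.cons x (Fin.cons y u) : Fin (m+1+1+1) → G) i) else 0)
      = if x + (y + ∑ i, u i) = a then A x * B y * ∏ i, P i (u i) else 0 := by
    intro x y u
    rw [Fin.sum_cons, Fin.sum_cons]
    by_cases h : x + (y + ∑ i, u i) = a
    · rw [if_pos h, if_pos h, Fin.prod_univ_succ, Fin.prod_univ_succ]
      simp only [Fin.cons_zero, Fin.cons_succ, Fin.succ_zero_eq_one,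
        show (Fin.cons x (Fin.cons y u) : Fin (m+1+1+1) → G) 1 = y from by
          rw [← Fin.succ_zero_eq_one, Fin.cons_succ, Fin.cons_zero],
        hQ0, hQ1, hQs, mul_assoc]
    · rw [if_neg h, if_neg h]
  have hR : ∀ (x y z : G),
      (if (∑ i, (Fin.cons x (Fin.cons y (Fin.cons z finZeroElim)) : Fin (2+1) → G) i) = a
        then A ((Fin.cons x (Fin.cons y (Fin.cons z finZeroElim)) : Fin (2+1) → G) 0)
          * B ((Fin.cons x (Fin.cons y (Fin.cons z finZeroElim)) : Fin (2+1) → G) 1)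
          * ∑ u : Fin (m+1) → G,
              (if (∑ i, u i) = (Fin.cons x (Fin.cons y (Fin.cons z finZeroElim)) : Fin (2+1) → G) 2
                then ∏ i, P i (u i) else 0)
        else 0)
      = if x + (y + z) = a then
          A x * B y * ∑ u : Fin (m+1) → G, (if (∑ i, u i) = z then ∏ i, P i (u i) else 0)
        else 0 := by
    intro x y z
    have e0 : (Fin.cons x (Fin.cons y (Fin.cons z finZeroElim)) : Fin (2+1) → G) 0 = x := rfl
    have e1 : (Fin.cons x (Fin.cons y (Fin.cons z finZeroElim)) : Fin (2+1) → G) 1 = y := rfl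
    have e2 : (Fin.cons x (Fin.cons y (Fin.cons z finZeroElim)) : Fin (2+1) → G) 2 = z := rfl
    have esum : (∑ i, (Fin.cons x (Fin.cons y (Fin.cons z finZeroElim)) : Fin (2+1) → G) i)
        = x + (y + z) := by
      rw [Fin.sum_cons, Fin.sum_cons, Fin.sum_cons]
      simp
    rw [e0, e1, e2, esum]
  rw [sum_pi_succ]
  conv_lhs => enter [2, x]; rw [sum_pi_succ]
  simp only [hL]
  rw [sum_pi_three]
  simp only [hR]
  refine Finset.sum_congr rfl fun x _ => Finset.sum_congr rfl fun y _ => ?_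
  simp only [Finset.mul_sum, mul_ite, mul_zero, _root_.ite_sum_zero]
  rw [Finset.sum_comm]
  refine Finset.sum_congr rfl fun u _ => ?_
  exact (collapse x y a (∑ i, u i) _).symm

/-- **The 3-fold convolution generates all odd convolutions:** for `K = 2N+1`
`n`-qubit states (`N ≥ 1`),
`⊠_K(⊗ᵢρᵢ) = ⊠₃(ρ₁ ⊗ ρ₂ ⊗ ⊠_{K-2}(⊗_{i≥3} ρᵢ))`. -/
theorem qconv_generated_by_three (n N : ℕ) (hN : 1 ≤ N)
    (ρ : Fin (2 * N + 1) → Matrix (Fin n → ZMod 2) (Fin n → ZMod 2) ℂ)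
    (hρ : ∀ i, IsState (ρ i)) :
    qconv (2 * N) ρ =
      qconv 2 (fun j : Fin 3 =>
        if j = 0 then ρ ⟨0, by omega⟩
        else if j = 1 then ρ ⟨1, by omega⟩
        else qconv (2 * N - 2)
          (fun i : Fin (2 * N - 2 + 1) => ρ ⟨i.val + 2, by omega⟩)) := by
  have h2 : ∀ x : Fin n → ZMod 2, x + x = 0 := by
    intro x
    funext i
    show x i + x i = 0
    exact CharTwo.add_self_eq_zero (x i)
  obtain ⟨M, rfl⟩ : ∃ M, N = M + 1 := ⟨N - 1, by omega⟩
  ext a b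
  rw [qconv_apply_eq h2 ⟨M + 1, rfl⟩, qconv_apply_eq h2 ⟨1, rfl⟩]
  conv_rhs => enter [2, s]; rw [Fin.prod_univ_three]
  have f00 : ((0 : Fin 3) = 0) = True := eq_true rfl
  have f10 : ((1 : Fin 3) = 0) = False := eq_false (by decide)
  have f20 : ((2 : Fin 3) = 0) = False := eq_false (by decide)
  have f21 : ((2 : Fin 3) = 1) = False := eq_false (by decide)
  have f11 : ((1 : Fin 3) = 1) = True := eq_true rfl
  simp only [f00, f10, f20, f21, f11, if_true, if_false]
  have hdvd2 : 2 ∣ 2 * (M + 1) - 2 := ⟨M, by omega⟩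
  simp only [qconv_apply_eq h2 hdvd2]
  have hxx : ∀ x y : Fin n → ZMod 2, x + (x + y) = y := fun x y => by
    rw [← add_assoc, h2, zero_add]
  simp only [hxx]
  have hQ0 : ∀ x : Fin n → ZMod 2,
      ρ (0 : Fin (2*M+1+1+1)) x (x + (a+b)) = ρ ⟨0, by omega⟩ x (x + (a+b)) := by
    intro x
    have h0 : (0 : Fin (2*M+1+1+1)) = ⟨0, by omega⟩ := by ext; simp
    rw [h0]
  have hQ1 : ∀ x : Fin n → ZMod 2,
      ρ (1 : Fin (2*M+1+1+1)) x (x + (a+b)) = ρ ⟨1, by omega⟩ x (x + (a+b)) := by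
    intro x
    have h1 : (1 : Fin (2*M+1+1+1)) = ⟨1, by omega⟩ := by ext; simp
    rw [h1]
  have hQs : ∀ (i : Fin (2*M+1)) (x : Fin n → ZMod 2),
      ρ i.succ.succ x (x + (a+b)) = ρ ⟨(i : ℕ) + 2, by omega⟩ x (x + (a+b)) := by
    intro i x
    have hs : i.succ.succ = (⟨(i : ℕ) + 2, by omega⟩ : Fin (2*M+1+1+1)) := by
      ext
      simp only [Fin.val_succ]
    rw [hs]
  exact combin (2 * M)
    (fun v => ρ ⟨0, by omega⟩ v (v + (a + b)))
    (fun v => ρ ⟨1, by omega⟩ v (v + (a + b)))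
    (fun i v => ρ ⟨(i : ℕ) + 2, by omega⟩ v (v + (a + b)))
    (fun i v => ρ i v (v + (a + b)))
    hQ0 hQ1 hQs a
end

section
/- Entropy increase under convolution: for any three n-qubit states ρ_1, ρ_2, ρ_3 and any α ∈ [0,∞], the quantum Rényi entropy satisfies S_α(⊠_3(ρ_1⊗ρ_2⊗ρ_3)) ≥ max{S_α(ρ_1), S_α(ρ_2), S_α(ρ_3)}. -/
open Matrix Finset
open scoped ComplexOrder

variable {G : Type*} [AddCommGroup G] [Fintype G] [DecidableEq G]

open scoped ENNReal

/-- The Rényi entropy `S_α` of a spectrum `lam`, for `α ∈ [0,∞]`: the von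
Neumann entropy at `α = 1`, `-log ‖·‖` at `α = ∞`, and
`(1-α)⁻¹ log Σ_{λᵢ ≠ 0} λᵢ^α` otherwise (so `S₀ = log rank`). -/
noncomputable def renyiEntropy {ι : Type*} [Fintype ι] (α : ℝ≥0∞) (lam : ι → ℝ) : ℝ :=
  if α = 1 then -∑ i, lam i * Real.log (lam i)
  else if α = ⊤ then -Real.log (sSup (Set.range lam))
  else (1 - α.toReal)⁻¹ *
    Real.log (∑ i, if lam i = 0 then 0 else lam i ^ α.toReal)


set_option linter.unusedSectionVars false

/-! ### Clean `Fin 3` aliases -/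

def key3 : (Fin 3 → G) → (Fin 3 → G) := keyFun 2

def U3 : Matrix (Fin 3 → G) (Fin 3 → G) ℂ := keyU 2

def bigT (ρ : Fin 3 → Matrix G G ℂ) : Matrix (Fin 3 → G) (Fin 3 → G) ℂ := bigTensor 2 ρ

noncomputable def ptr (M : Matrix (Fin 3 → G) (Fin 3 → G) ℂ) : Matrix G G ℂ := ptraceFirst 2 M

lemma qconv_eq (ρ : Fin 3 → Matrix G G ℂ) : qconv 2 ρ = ptr (U3 * bigT ρ * U3ᴴ) := rfl

lemma bigT_apply (ρ : Fin 3 → Matrix G G ℂ) (x y : Fin 3 → G) :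
    bigT ρ x y = ∏ i, ρ i (x i) (y i) := rfl

def splitE (a : G) (r : {i : Fin 3 // i ≠ 0} → G) : Fin 3 → G :=
  fun i => if h : i = 0 then a else r ⟨i, h⟩

lemma ptr_apply (M : Matrix (Fin 3 → G) (Fin 3 → G) ℂ) (a b : G) :
    ptr M a b = ∑ r : {i : Fin 3 // i ≠ 0} → G, M (splitE a r) (splitE b r) := rfl

lemma U3_apply (x y : Fin 3 → G) : U3 (G := G) x y = if x = key3 y then 1 else 0 := rfl

lemma key3_apply_zero (t : Fin 3 → G) : key3 t 0 = t 0 + t 1 + t 2 := by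
  show (if (0 : Fin 3) = 0 then ∑ j, t j else t 0 + t 0) = _
  rw [if_pos rfl]
  exact Fin.sum_univ_three t

lemma key3_apply_ne (t : Fin 3 → G) {i : Fin 3} (h : i ≠ 0) : key3 t i = t i + t 0 := by
  show (if i = 0 then _ else t i + t 0) = _
  rw [if_neg h]

def invKey (s : Fin 3 → G) : Fin 3 → G :=
  fun i => if i = 0 then s 1 + s 2 - s 0 else s i - (s 1 + s 2 - s 0)

lemma invKey_apply_zero (s : Fin 3 → G) : invKey s 0 = s 1 + s 2 - s 0 := if_pos rfl

lemma invKey_apply_ne (s : Fin 3 → G) {i : Fin 3} (h : i ≠ 0) :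
    invKey s i = s i - (s 1 + s 2 - s 0) := if_neg h

lemma key3_invKey (s : Fin 3 → G) : key3 (invKey s) = s := by
  have h1 : (1 : Fin 3) ≠ 0 := by decide
  have h2 : (2 : Fin 3) ≠ 0 := by decide
  funext i
  by_cases h : i = 0
  · subst h
    rw [key3_apply_zero, invKey_apply_zero, invKey_apply_ne _ h1, invKey_apply_ne _ h2]
    abel
  · rw [key3_apply_ne _ h, invKey_apply_ne _ h, invKey_apply_zero]
    abel

lemma invKey_key3 (t : Fin 3 → G) : invKey (key3 t) = t := by
  have h1 : (1 : Fin 3) ≠ 0 := by decide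
  have h2 : (2 : Fin 3) ≠ 0 := by decide
  funext i
  by_cases h : i = 0
  · subst h
    rw [invKey_apply_zero, key3_apply_zero, key3_apply_ne _ h1, key3_apply_ne _ h2]
    abel
  · rw [invKey_apply_ne _ h, key3_apply_ne _ h, key3_apply_zero,
      key3_apply_ne _ h1, key3_apply_ne _ h2]
    abel

lemma key3_bij : Function.Bijective (key3 : (Fin 3 → G) → (Fin 3 → G)) :=
  Function.bijective_iff_has_inverse.2 ⟨invKey, invKey_key3, key3_invKey⟩

lemma invKey_bij : Function.Bijective (invKey : (Fin 3 → G) → (Fin 3 → G)) :=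
  Function.bijective_iff_has_inverse.2 ⟨key3, key3_invKey, invKey_key3⟩

lemma U3_mul_apply (M : Matrix (Fin 3 → G) (Fin 3 → G) ℂ) (x y : Fin 3 → G) :
    (U3 * M : Matrix (Fin 3 → G) (Fin 3 → G) ℂ) x y = M (invKey x) y := by
  rw [Matrix.mul_apply]
  have h : ∀ z : Fin 3 → G, U3 (G := G) x z * M z y
      = if invKey x = z then M z y else 0 := by
    intro z
    by_cases h : invKey x = z
    · subst h
      simp [U3_apply, key3_invKey]
    · have hx : x ≠ key3 z := fun hx => h (hx ▸ invKey_key3 z)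
      simp [U3_apply, hx, h]
  simp_rw [h, Finset.sum_ite_eq, Finset.mem_univ, if_pos]

lemma mul_U3H_apply (M : Matrix (Fin 3 → G) (Fin 3 → G) ℂ) (x y : Fin 3 → G) :
    (M * U3ᴴ : Matrix (Fin 3 → G) (Fin 3 → G) ℂ) x y = M x (invKey y) := by
  rw [Matrix.mul_apply]
  have h : ∀ z : Fin 3 → G, M x z * (U3ᴴ : Matrix (Fin 3 → G) (Fin 3 → G) ℂ) z y
      = if invKey y = z then M x z else 0 := by
    intro z
    rw [conjTranspose_apply, U3_apply]
    by_cases h : invKey y = z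
    · subst h
      simp [key3_invKey]
    · have hy : y ≠ key3 z := fun hy => h (hy ▸ invKey_key3 z)
      simp [hy, h]
  simp_rw [h, Finset.sum_ite_eq, Finset.mem_univ, if_pos]

lemma conjU3_apply (M : Matrix (Fin 3 → G) (Fin 3 → G) ℂ) (x y : Fin 3 → G) :
    (U3 * M * U3ᴴ : Matrix (Fin 3 → G) (Fin 3 → G) ℂ) x y = M (invKey x) (invKey y) := by
  rw [mul_U3H_apply, U3_mul_apply]

lemma qconv_apply (ρ : Fin 3 → Matrix G G ℂ) (a b : G) :
    qconv 2 ρ a b = ∑ r : {i : Fin 3 // i ≠ 0} → G,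
      ∏ i, ρ i (invKey (splitE a r) i) (invKey (splitE b r) i) := by
  rw [qconv_eq, ptr_apply]
  refine Finset.sum_congr rfl fun r _ => ?_
  rw [conjU3_apply, bigT_apply]



lemma splitE_zero (a : G) (r : {i : Fin 3 // i ≠ 0} → G) : splitE a r 0 = a := rfl

lemma splitE_ne (a : G) (r : {i : Fin 3 // i ≠ 0} → G) (i : {i : Fin 3 // i ≠ 0}) :
    splitE a r i.1 = r i := by
  show (if h : i.1 = 0 then a else r ⟨i.1, h⟩) = r i
  rw [dif_neg i.2]

def splitEquiv : G × ({i : Fin 3 // i ≠ 0} → G) ≃ (Fin 3 → G) where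
  toFun p := splitE p.1 p.2
  invFun t := (t 0, fun i => t i.1)
  left_inv p := by
    obtain ⟨a, r⟩ := p
    have h2 : (fun i : {i : Fin 3 // i ≠ 0} => splitE a r i.1) = r :=
      funext fun i => splitE_ne a r i
    show (splitE a r 0, fun i : {i : Fin 3 // i ≠ 0} => splitE a r i.1) = (a, r)
    rw [splitE_zero, h2]
  right_inv t := by
    funext i
    show (if h : i = 0 then t 0 else t i) = t i
    by_cases h : i = 0
    · rw [dif_pos h, h]
    · rw [dif_neg h]

section
open scoped MatrixOrder
lemma psd_eq_ctmul {n : Type*} [Fintype n] [DecidableEq n] {M : Matrix n n ℂ} (hM : M.PosSemidef) :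
    ∃ B : Matrix n n ℂ, M = Bᴴ * B := by
  obtain ⟨B, rfl⟩ := CStarAlgebra.nonneg_iff_eq_star_mul_self.mp hM.nonneg
  exact ⟨B, rfl⟩
end

/-- `ptr` preserves positive semidefiniteness. -/
lemma ptr_posSemidef {M : Matrix (Fin 3 → G) (Fin 3 → G) ℂ} (hM : M.PosSemidef) :
    (ptr M).PosSemidef := by
  obtain ⟨B, rfl⟩ := psd_eq_ctmul hM
  set C : Matrix ((Fin 3 → G) × ({i : Fin 3 // i ≠ 0} → G)) G ℂ :=
    Matrix.of fun zr a => B zr.1 (splitE a zr.2) with hC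
  have : ptr (Bᴴ * B) = Cᴴ * C := by
    ext a b
    rw [ptr_apply, Matrix.mul_apply]
    rw [Fintype.sum_prod_type]
    rw [Finset.sum_comm]
    refine Finset.sum_congr rfl fun r _ => ?_
    rw [Matrix.mul_apply]
    refine Finset.sum_congr rfl fun z _ => ?_
    simp [hC, Matrix.conjTranspose_apply]
  rw [this]
  exact Matrix.posSemidef_conjTranspose_mul_self C

lemma ptr_trace (M : Matrix (Fin 3 → G) (Fin 3 → G) ℂ) : (ptr M).trace = M.trace := by
  have h := Equiv.sum_comp (splitEquiv (G := G)) (fun t => M t t)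
  rw [Fintype.sum_prod_type] at h
  rw [Matrix.trace, Matrix.trace]
  simp only [Matrix.diag_apply, ptr_apply]
  exact h

/-- `bigT` preserves positive semidefiniteness. -/
lemma bigT_posSemidef {ρ : Fin 3 → Matrix G G ℂ} (hρ : ∀ i, (ρ i).PosSemidef) :
    (bigT ρ).PosSemidef := by
  have h : ∀ i, ∃ B : Matrix G G ℂ, ρ i = Bᴴ * B := fun i =>
    psd_eq_ctmul (hρ i)
  choose B hB using h
  have : bigT ρ = (bigT B)ᴴ * bigT B := by
    ext x y
    rw [Matrix.mul_apply, bigT_apply]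
    have : ∀ z, ((bigT B)ᴴ : Matrix (Fin 3 → G) (Fin 3 → G) ℂ) x z * bigT B z y
        = ∏ i, star (B i (z i) (x i)) * B i (z i) (y i) := by
      intro z
      rw [Matrix.conjTranspose_apply, bigT_apply, bigT_apply, star_prod,
        ← Finset.prod_mul_distrib]
    simp_rw [this]
    have hps := Finset.prod_univ_sum (fun _ : Fin 3 => (univ : Finset G))
      (fun i z => star (B i z (x i)) * B i z (y i))
    rw [← Fintype.piFinset_univ, ← hps]
    refine Finset.prod_congr rfl fun i _ => ?_
    rw [hB i, Matrix.mul_apply]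
    exact Finset.sum_congr rfl fun z _ => by rw [Matrix.conjTranspose_apply]
  rw [this]
  exact Matrix.posSemidef_conjTranspose_mul_self _

lemma bigT_trace (ρ : Fin 3 → Matrix G G ℂ) : (bigT ρ).trace = ∏ i, (ρ i).trace := by
  rw [Matrix.trace]
  simp only [Matrix.diag_apply, bigT_apply]
  have hps := Finset.prod_univ_sum (fun _ : Fin 3 => (univ : Finset G))
    (fun i z => ρ i z z)
  rw [← Fintype.piFinset_univ, ← hps]
  rfl

/-! ### The channel in slot `j` -/

noncomputable def chan (ρ : Fin 3 → Matrix G G ℂ) (j : Fin 3) (σ : Matrix G G ℂ) :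
    Matrix G G ℂ :=
  qconv 2 (Function.update ρ j σ)

lemma chan_posSemidef {ρ : Fin 3 → Matrix G G ℂ} (hρ : ∀ i, (ρ i).PosSemidef) (j : Fin 3)
    {σ : Matrix G G ℂ} (hσ : σ.PosSemidef) : (chan ρ j σ).PosSemidef := by
  rw [chan, qconv_eq]
  refine ptr_posSemidef ?_
  refine Matrix.PosSemidef.mul_mul_conjTranspose_same (bigT_posSemidef fun i => ?_) U3
  by_cases h : i = j
  · subst h; rw [Function.update_self]; exact hσ
  · rw [Function.update_of_ne h]; exact hρ i

lemma conjU3_trace (M : Matrix (Fin 3 → G) (Fin 3 → G) ℂ) :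
    (U3 * M * U3ᴴ).trace = M.trace := by
  rw [Matrix.trace, Matrix.trace]
  simp only [Matrix.diag_apply]
  have h : ∀ x, (U3 * M * U3ᴴ : Matrix (Fin 3 → G) (Fin 3 → G) ℂ) x x
      = M (invKey x) (invKey x) := fun x => conjU3_apply M x x
  simp_rw [h]
  exact invKey_bij.sum_comp fun t => M t t

lemma chan_trace (ρ : Fin 3 → Matrix G G ℂ) (j : Fin 3) (σ : Matrix G G ℂ) :
    (chan ρ j σ).trace = σ.trace * ∏ i ∈ Finset.univ.erase j, (ρ i).trace := by
  rw [chan, qconv_eq, ptr_trace, conjU3_trace, bigT_trace]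
  rw [← Finset.mul_prod_erase Finset.univ _ (Finset.mem_univ j), Function.update_self]
  congr 1
  exact Finset.prod_congr rfl fun i hi =>
    by rw [Function.update_of_ne (Finset.mem_erase.mp hi).1]

lemma chan_apply (ρ : Fin 3 → Matrix G G ℂ) (j : Fin 3) (σ : Matrix G G ℂ) (a b : G) :
    chan ρ j σ a b = ∑ r : {i : Fin 3 // i ≠ 0} → G,
      σ (invKey (splitE a r) j) (invKey (splitE b r) j) *
        ∏ k ∈ Finset.univ.erase j,
          ρ k (invKey (splitE a r) k) (invKey (splitE b r) k) := by
  rw [chan, qconv_apply]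
  refine Finset.sum_congr rfl fun r _ => ?_
  rw [← Finset.mul_prod_erase Finset.univ _ (Finset.mem_univ j), Function.update_self]
  congr 1
  exact Finset.prod_congr rfl fun i hi =>
    by rw [Function.update_of_ne (Finset.mem_erase.mp hi).1]

lemma chan_sum {ι : Type*} [Fintype ι] (ρ : Fin 3 → Matrix G G ℂ) (j : Fin 3)
    (c : ι → ℂ) (M : ι → Matrix G G ℂ) :
    chan ρ j (∑ i, c i • M i) = ∑ i, c i • chan ρ j (M i) := by
  ext a b
  rw [chan_apply]
  rw [Matrix.sum_apply]
  simp only [Matrix.smul_apply, smul_eq_mul]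
  simp_rw [chan_apply, Matrix.sum_apply, Matrix.smul_apply, smul_eq_mul, Finset.sum_mul,
    Finset.mul_sum]
  rw [Finset.sum_comm]
  exact Finset.sum_congr rfl fun y _ => Finset.sum_congr rfl fun r _ => mul_assoc _ _ _

lemma invKey_splitE_eq_iff (a b : G) (r : {i : Fin 3 // i ≠ 0} → G) (k : Fin 3) :
    invKey (splitE a r) k = invKey (splitE b r) k ↔ a = b := by
  have h1 : (1 : Fin 3) ≠ 0 := by decide
  have h2 : (2 : Fin 3) ≠ 0 := by decide
  have e1 : ∀ c : G, splitE c r 1 = r ⟨1, h1⟩ := fun c => splitE_ne c r ⟨1, h1⟩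
  have e2 : ∀ c : G, splitE c r 2 = r ⟨2, h2⟩ := fun c => splitE_ne c r ⟨2, h2⟩
  by_cases hk : k = 0
  · subst hk
    rw [invKey_apply_zero, invKey_apply_zero, splitE_zero, splitE_zero, e1, e1, e2, e2]
    constructor
    · intro h; exact sub_right_injective h
    · intro h; rw [h]
  · rw [invKey_apply_ne _ hk, invKey_apply_ne _ hk, splitE_zero, splitE_zero,
      e1, e1, e2, e2]
    have e3 : splitE a r k = splitE b r k := by
      rw [splitE_ne a r ⟨k, hk⟩, splitE_ne b r ⟨k, hk⟩]
    rw [e3]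
    constructor
    · intro h; exact sub_right_injective (sub_right_injective h)
    · intro h; rw [h]


lemma sum_invKey_splitE (a : G) (r : {i : Fin 3 // i ≠ 0} → G) :
    ∑ k, invKey (splitE a r) k = a := by
  rw [Fin.sum_univ_three, ← key3_apply_zero, key3_invKey, splitE_zero]

lemma psi_bijective (a : G) (j : Fin 3) :
    Function.Bijective (fun (r : {i : Fin 3 // i ≠ 0} → G)
      (k : {k : Fin 3 // k ≠ j}) => invKey (splitE a r) k.1) := by
  have hcard : ∀ x : Fin 3, Fintype.card {i : Fin 3 // i ≠ x} = 2 := by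
    intro x
    rw [Fintype.card_subtype_compl, Fintype.card_subtype_eq, Fintype.card_fin]
  rw [Fintype.bijective_iff_injective_and_card]
  constructor
  · intro r r' h
    have key : invKey (splitE a r) = invKey (splitE a r') := by
      funext k
      by_cases hk : k = j
      · subst hk
        have he : ∑ l ∈ Finset.univ.erase k, invKey (splitE a r) l
            = ∑ l ∈ Finset.univ.erase k, invKey (splitE a r') l :=
          Finset.sum_congr rfl fun l hl =>
            congrFun h ⟨l, (Finset.mem_erase.mp hl).1⟩
        have d1 := Finset.add_sum_erase Finset.univ (invKey (splitE a r)) (Finset.mem_univ k)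
        have d2 := Finset.add_sum_erase Finset.univ (invKey (splitE a r')) (Finset.mem_univ k)
        have hsum : invKey (splitE a r) k + ∑ l ∈ Finset.univ.erase k, invKey (splitE a r) l
            = invKey (splitE a r') k + ∑ l ∈ Finset.univ.erase k, invKey (splitE a r') l := by
          rw [d1, d2, sum_invKey_splitE, sum_invKey_splitE]
        rw [he] at hsum
        exact add_right_cancel hsum
      · exact congrFun h ⟨k, hk⟩
    have hsp : splitE a r = splitE a r' := by
      rw [← key3_invKey (splitE a r), key, key3_invKey]
    funext k
    rw [← splitE_ne a r k, ← splitE_ne a r' k, hsp]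
  · rw [Fintype.card_fun, Fintype.card_fun, hcard, hcard]

lemma chan_one {ρ : Fin 3 → Matrix G G ℂ} {j : Fin 3}
    (hρ : ∀ i, i ≠ j → (ρ i).trace = 1) : chan ρ j 1 = 1 := by
  ext a b
  rw [chan_apply]
  by_cases hab : a = b
  · subst hab
    rw [Matrix.one_apply_eq]
    have h1 : ∀ r : {i : Fin 3 // i ≠ 0} → G,
        (1 : Matrix G G ℂ) (invKey (splitE a r) j) (invKey (splitE a r) j) *
          ∏ k ∈ Finset.univ.erase j,
            ρ k (invKey (splitE a r) k) (invKey (splitE a r) k)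
        = ∏ k : {k : Fin 3 // k ≠ j},
            ρ k.1 (invKey (splitE a r) k.1) (invKey (splitE a r) k.1) := by
      intro r
      rw [Matrix.one_apply_eq, one_mul]
      exact Finset.prod_subtype _ (fun x => by simp) _
    simp_rw [h1]
    have hcomp := Function.Bijective.sum_comp (psi_bijective a j)
      (fun u : {k : Fin 3 // k ≠ j} → G => ∏ k, ρ k.1 (u k) (u k))
    rw [hcomp]
    have hps := Finset.prod_univ_sum (fun _ : {k : Fin 3 // k ≠ j} => (univ : Finset G))
      (fun k z => ρ k.1 z z)
    rw [← Fintype.piFinset_univ, ← hps]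
    have : ∀ k : {k : Fin 3 // k ≠ j}, (∑ z : G, ρ k.1 z z) = 1 := fun k =>
      (show (∑ z : G, ρ k.1 z z) = (ρ k.1).trace from rfl).trans (hρ k.1 k.2)
    rw [Finset.prod_congr rfl fun k _ => this k, Finset.prod_const_one]
  · rw [Matrix.one_apply_ne hab]
    refine Finset.sum_eq_zero fun r _ => ?_
    have : invKey (splitE a r) j ≠ invKey (splitE b r) j := fun h =>
      hab ((invKey_splitE_eq_iff a b r j).mp h)
    rw [Matrix.one_apply_ne this, zero_mul]


/-! ### Rank-one spectral decomposition -/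

section Spectral

variable {ι : Type*} [Fintype ι] [DecidableEq ι]

/-- Rank-one projector onto the `i`-th column of `U`. -/
def outerP (U : Matrix ι ι ℂ) (i : ι) : Matrix ι ι ℂ :=
  Matrix.of fun a b => U a i * star (U b i)

lemma dot_outerP (U : Matrix ι ι ℂ) (i : ι) (x : ι → ℂ) :
    star x ⬝ᵥ (outerP U i *ᵥ x)
      = star (∑ b, star (U b i) * x b) * (∑ b, star (U b i) * x b) := by
  rw [show star (∑ b, star (U b i) * x b) = ∑ b, U b i * star (x b) by
    rw [star_sum]; exact Finset.sum_congr rfl fun b _ => by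
      simp [star_mul', star_star]]
  rw [Finset.sum_mul_sum]
  simp only [dotProduct, mulVec, outerP, Matrix.of_apply, Pi.star_apply, Finset.mul_sum]
  refine Finset.sum_congr rfl fun a _ => Finset.sum_congr rfl fun b _ => ?_
  ring

lemma outerP_posSemidef (U : Matrix ι ι ℂ) (i : ι) : (outerP U i).PosSemidef := by
  refine Matrix.PosSemidef.of_dotProduct_mulVec_nonneg ?_ ?_
  · ext a b
    simp only [outerP, Matrix.conjTranspose_apply, Matrix.of_apply]
    rw [star_mul', star_star, mul_comm]
  · intro x
    rw [dot_outerP]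
    exact star_mul_self_nonneg _

lemma outerP_trace {U : Matrix ι ι ℂ} (hU : star U * U = 1) (i : ι) :
    (outerP U i).trace = 1 := by
  have h := congrFun (congrFun hU i) i
  rw [Matrix.mul_apply] at h
  rw [Matrix.trace]
  simp only [Matrix.diag_apply, outerP, Matrix.of_apply]
  rw [show (1 : Matrix ι ι ℂ) i i = 1 from Matrix.one_apply_eq i] at h
  rw [← h]
  refine Finset.sum_congr rfl fun a _ => ?_
  rw [Matrix.star_apply, mul_comm]

lemma sum_outerP {U : Matrix ι ι ℂ} (hU : U * star U = 1) :
    (∑ i, outerP U i) = 1 := by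
  ext a b
  rw [Matrix.sum_apply]
  have h := congrFun (congrFun hU a) b
  rw [Matrix.mul_apply] at h
  rw [← h]
  exact Finset.sum_congr rfl fun i _ => by simp [outerP, Matrix.star_apply]

lemma spectral_sum {A : Matrix ι ι ℂ} (hA : A.IsHermitian) :
    A = ∑ i, (hA.eigenvalues i : ℂ) •
      outerP (hA.eigenvectorUnitary : Matrix ι ι ℂ) i := by
  conv_lhs => rw [Matrix.IsHermitian.spectral_theorem hA, Unitary.conjStarAlgAut_apply]
  ext a b
  rw [Matrix.sum_apply, Matrix.mul_apply]
  refine Finset.sum_congr rfl fun i _ => ?_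
  rw [Matrix.mul_diagonal, Matrix.smul_apply, Matrix.star_apply]
  simp only [outerP, Matrix.of_apply, Function.comp_apply, smul_eq_mul]
  rw [mul_right_comm, mul_comm]
  rfl

lemma quad_expand (N : Matrix ι ι ℂ) (w : ι → ℂ) :
    star w ⬝ᵥ (N *ᵥ w) = ∑ a, ∑ b, star (w a) * (N a b * w b) := by
  simp only [dotProduct, mulVec, Pi.star_apply, Finset.mul_sum]

/-- summing the quadratic forms over an orthonormal family recovers the trace -/
lemma sum_quad_eq_trace {U : Matrix ι ι ℂ} (hU : U * star U = 1) (N : Matrix ι ι ℂ) :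
    ∑ k, star (fun a => U a k) ⬝ᵥ (N *ᵥ (fun a => U a k)) = N.trace := by
  simp_rw [quad_expand]
  rw [Finset.sum_comm]
  rw [Matrix.trace]
  refine Finset.sum_congr rfl fun a _ => ?_
  rw [Finset.sum_comm]
  have h : ∀ b, ∑ k, star (U a k) * (N a b * U b k) = N a b * (U * star U) b a := by
    intro b
    rw [Matrix.mul_apply, Finset.mul_sum]
    refine Finset.sum_congr rfl fun k _ => ?_
    rw [Matrix.star_apply]
    ring
  simp_rw [h, hU]
  rw [Finset.sum_eq_single a (fun b _ hb => by rw [Matrix.one_apply_ne' (Ne.symm hb), mul_zero])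
    (fun h => absurd (Finset.mem_univ a) h)]
  rw [Matrix.one_apply_eq, mul_one, Matrix.diag_apply]

lemma quad_outerP_col {U : Matrix ι ι ℂ} (hU : star U * U = 1) (i k : ι) :
    star (fun a => U a k) ⬝ᵥ (outerP U i *ᵥ (fun a => U a k))
      = if i = k then 1 else 0 := by
  rw [dot_outerP]
  have h : (∑ b, star (U b i) * U b k) = (star U * U) i k := by
    rw [Matrix.mul_apply]
    exact Finset.sum_congr rfl fun b _ => by rw [Matrix.star_apply]
  rw [h, hU]
  by_cases hik : i = k
  · subst hik; rw [Matrix.one_apply_eq]; norm_num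
  · rw [Matrix.one_apply_ne hik, if_neg hik]
    norm_num

end Spectral


section DS

variable {ι : Type*} [Fintype ι] [DecidableEq ι]

lemma quad_sum {κ : Type*} [Fintype κ] (N : κ → Matrix ι ι ℂ) (w : ι → ℂ) :
    ∑ j, star w ⬝ᵥ (N j *ᵥ w) = star w ⬝ᵥ ((∑ j, N j) *ᵥ w) := by
  simp_rw [quad_expand, Matrix.sum_apply, Finset.sum_mul, Finset.mul_sum]
  rw [Finset.sum_comm]
  exact Finset.sum_congr rfl fun a _ => Finset.sum_comm

lemma quad_smul (c : ℂ) (N : Matrix ι ι ℂ) (w : ι → ℂ) :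
    star w ⬝ᵥ ((c • N) *ᵥ w) = c * (star w ⬝ᵥ (N *ᵥ w)) := by
  rw [Matrix.smul_mulVec, dotProduct_smul, smul_eq_mul]

lemma dot_self_one {U : Matrix ι ι ℂ} (hU : star U * U = 1) (k : ι) :
    star (fun a => U a k) ⬝ᵥ (fun a => U a k) = 1 := by
  have h := congrFun (congrFun hU k) k
  rw [Matrix.mul_apply] at h
  rw [show (1 : Matrix ι ι ℂ) k k = 1 from Matrix.one_apply_eq k] at h
  rw [dotProduct, ← h]
  exact Finset.sum_congr rfl fun a _ => by rw [Matrix.star_apply]; rfl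

lemma quad_eigen' {U : Matrix ι ι ℂ} (hU' : star U * U = 1) (lam : ι → ℝ) (k : ι) :
    star (fun a => U a k) ⬝ᵥ
      ((∑ i, (lam i : ℂ) • outerP U i) *ᵥ (fun a => U a k)) = (lam k : ℂ) := by
  rw [← quad_sum]
  simp_rw [quad_smul, quad_outerP_col hU']
  simp

theorem exists_DS {A B : Matrix ι ι ℂ}
    (hA : A.PosSemidef) (hB : B.IsHermitian)
    (Φ : Matrix ι ι ℂ → Matrix ι ι ℂ)
    (hlin : ∀ (c : ι → ℂ) (M : ι → Matrix ι ι ℂ),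
      Φ (∑ i, c i • M i) = ∑ i, c i • Φ (M i))
    (hpsd : ∀ M, M.PosSemidef → (Φ M).PosSemidef)
    (htr : ∀ M, M.PosSemidef → (Φ M).trace = M.trace)
    (hone : Φ 1 = 1)
    (hAB : Φ A = B) :
    ∃ D : ι → ι → ℝ, (∀ k i, 0 ≤ D k i) ∧ (∀ k, ∑ i, D k i = 1) ∧
      (∀ i, ∑ k, D k i = 1) ∧
      (∀ k, (hB.eigenvalues k : ℝ) = ∑ i, D k i * hA.isHermitian.eigenvalues i) := by
  set UA := (hA.isHermitian.eigenvectorUnitary : Matrix ι ι ℂ) with hUAdef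
  set UB := (hB.eigenvectorUnitary : Matrix ι ι ℂ) with hUBdef
  have hUA1 : UA * star UA = 1 := mem_unitaryGroup_iff.mp hA.isHermitian.eigenvectorUnitary.prop
  have hUA2 : star UA * UA = 1 := mem_unitaryGroup_iff'.mp hA.isHermitian.eigenvectorUnitary.prop
  have hUB1 : UB * star UB = 1 := mem_unitaryGroup_iff.mp hB.eigenvectorUnitary.prop
  have hUB2 : star UB * UB = 1 := mem_unitaryGroup_iff'.mp hB.eigenvectorUnitary.prop
  set w : ι → ι → ℂ := fun k a => UB a k with hwdef
  set q : ι → ι → ℂ := fun k i => star (w k) ⬝ᵥ (Φ (outerP UA i) *ᵥ w k) with hqdef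
  have hq0 : ∀ k i, 0 ≤ q k i := fun k i => (hpsd _ (outerP_posSemidef UA i)).dotProduct_mulVec_nonneg (w k)
  have hqim : ∀ k i, (q k i).im = 0 := fun k i => ((Complex.le_def.mp (hq0 k i)).2).symm
  have hqre : ∀ k i, q k i = ((q k i).re : ℂ) := fun k i =>
    Complex.ext (by simp) (by simp [hqim k i])
  refine ⟨fun k i => (q k i).re, fun k i => ?_, fun k => ?_, fun i => ?_, fun k => ?_⟩
  · have := (Complex.le_def.mp (hq0 k i)).1
    simpa using this
  · -- row sums
    have hsumP : (∑ i, outerP UA i) = 1 := sum_outerP hUA1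
    have hlin1 : Φ (∑ i, outerP UA i) = ∑ i, Φ (outerP UA i) := by
      have h := hlin (fun _ => 1) (fun i => outerP UA i)
      simpa using h
    have hsq : (∑ i, q k i) = 1 := by
      simp only [hqdef]
      rw [quad_sum (fun i => Φ (outerP UA i)) (w k), ← hlin1, hsumP, hone,
        Matrix.one_mulVec]
      exact dot_self_one hUB2 k
    have := congrArg Complex.re hsq
    rw [Complex.re_sum] at this
    simpa using this
  · -- column sums
    have hsq : (∑ k, q k i) = 1 := by
      simp only [hqdef, hwdef]
      rw [sum_quad_eq_trace hUB1 (Φ (outerP UA i)),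
        htr _ (outerP_posSemidef UA i), outerP_trace hUA2]
    have := congrArg Complex.re hsq
    rw [Complex.re_sum] at this
    simpa using this
  · -- eigenvalue equation
    have hBdec : B = ∑ i, (hA.isHermitian.eigenvalues i : ℂ) • Φ (outerP UA i) := by
      rw [← hAB]
      conv_lhs => rw [spectral_sum hA.isHermitian]
      exact hlin _ _
    obtain ⟨μ, hμ⟩ : ∃ μ : ℝ, hB.eigenvalues k = μ := ⟨_, rfl⟩
    have hquad := quad_eigen' hUB2 hB.eigenvalues k
    have hBeq : B = ∑ i, (hB.eigenvalues i : ℂ) • outerP UB i := spectral_sum hB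
    rw [← hBeq, hμ] at hquad
    rw [hBdec] at hquad
    rw [← quad_sum] at hquad
    simp_rw [quad_smul] at hquad
    have hq' : ∀ i, star (fun a => UB a k) ⬝ᵥ (Φ (outerP UA i) *ᵥ (fun a => UB a k))
        = (((q k i).re : ℝ) : ℂ) := fun i => hqre k i
    simp_rw [hq', ← Complex.ofReal_mul, ← Complex.ofReal_sum] at hquad
    have heq : ∑ i, hA.isHermitian.eigenvalues i * (q k i).re = μ :=
      Complex.ofReal_inj.mp hquad
    dsimp only
    rw [hμ, ← heq]
    exact Finset.sum_congr rfl fun i _ => mul_comm _ _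

end DS

section Renyi

variable {ι κ : Type*} [Fintype ι] [Fintype κ]
variable {lam : ι → ℝ} {mu : κ → ℝ} {D : κ → ι → ℝ}

lemma jensen_transfer (hlam : ∀ i, 0 ≤ lam i)
    (hD0 : ∀ k i, 0 ≤ D k i) (hrow : ∀ k, ∑ i, D k i = 1) (hcol : ∀ i, ∑ k, D k i = 1)
    (hmu : ∀ k, mu k = ∑ i, D k i * lam i)
    {f : ℝ → ℝ} (hf : ConcaveOn ℝ (Set.Ici 0) f) :
    ∑ i, f (lam i) ≤ ∑ k, f (mu k) := by
  have h1 : ∀ k, ∑ i, D k i * f (lam i) ≤ f (mu k) := by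
    intro k
    have h := hf.le_map_sum (t := Finset.univ) (w := D k) (p := lam)
      (fun i _ => hD0 k i) (hrow k) (fun i _ => hlam i)
    simp only [smul_eq_mul] at h
    rw [hmu k]
    exact h
  calc ∑ i, f (lam i) = ∑ i, (∑ k, D k i) * f (lam i) := by
        refine Finset.sum_congr rfl fun i _ => ?_
        rw [hcol i, one_mul]
    _ = ∑ k, ∑ i, D k i * f (lam i) := by
        simp_rw [Finset.sum_mul]
        exact Finset.sum_comm
    _ ≤ ∑ k, f (mu k) := Finset.sum_le_sum fun k _ => h1 k

lemma jensen_transfer_convex (hlam : ∀ i, 0 ≤ lam i)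
    (hD0 : ∀ k i, 0 ≤ D k i) (hrow : ∀ k, ∑ i, D k i = 1) (hcol : ∀ i, ∑ k, D k i = 1)
    (hmu : ∀ k, mu k = ∑ i, D k i * lam i)
    {f : ℝ → ℝ} (hf : ConvexOn ℝ (Set.Ici 0) f) :
    ∑ k, f (mu k) ≤ ∑ i, f (lam i) := by
  have h1 : ∀ k, f (mu k) ≤ ∑ i, D k i * f (lam i) := by
    intro k
    have h := hf.map_sum_le (t := Finset.univ) (w := D k) (p := lam)
      (fun i _ => hD0 k i) (hrow k) (fun i _ => hlam i)
    simp only [smul_eq_mul] at h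
    rw [hmu k]
    exact h
  calc ∑ k, f (mu k) ≤ ∑ k, ∑ i, D k i * f (lam i) := Finset.sum_le_sum fun k _ => h1 k
    _ = ∑ i, (∑ k, D k i) * f (lam i) := by
        simp_rw [Finset.sum_mul]
        exact Finset.sum_comm
    _ = ∑ i, f (lam i) := by
        refine Finset.sum_congr rfl fun i _ => ?_
        rw [hcol i, one_mul]

lemma renyi_mono (α : ℝ≥0∞)
    (hlam : ∀ i, 0 ≤ lam i) (hsum : ∑ i, lam i = 1)
    (hD0 : ∀ k i, 0 ≤ D k i) (hrow : ∀ k, ∑ i, D k i = 1) (hcol : ∀ i, ∑ k, D k i = 1)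
    (hmu : ∀ k, mu k = ∑ i, D k i * lam i) :
    renyiEntropy α lam ≤ renyiEntropy α mu := by
  have hmu0 : ∀ k, 0 ≤ mu k := fun k => by
    rw [hmu k]
    exact Finset.sum_nonneg fun i _ => mul_nonneg (hD0 k i) (hlam i)
  have hmusum : ∑ k, mu k = 1 := by
    simp_rw [hmu]
    rw [Finset.sum_comm]
    rw [← hsum]
    refine Finset.sum_congr rfl fun i _ => ?_
    rw [← Finset.sum_mul, hcol i, one_mul]
  have hlampos : ∃ i, 0 < lam i := by
    by_contra h
    push_neg at h
    have : (∑ i, lam i) ≤ 0 := Finset.sum_nonpos fun i _ => h i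
    rw [hsum] at this; linarith
  have hmupos : ∃ k, 0 < mu k := by
    by_contra h
    push_neg at h
    have : (∑ k, mu k) ≤ 0 := Finset.sum_nonpos fun k _ => h k
    rw [hmusum] at this; linarith
  by_cases hα1 : α = 1
  · -- von Neumann case
    subst hα1
    rw [renyiEntropy, renyiEntropy, if_pos rfl, if_pos rfl]
    have hcv : ConcaveOn ℝ (Set.Ici 0) fun x : ℝ => -(x * Real.log x) :=
      Real.convexOn_mul_log.neg
    have h := jensen_transfer hlam hD0 hrow hcol hmu hcv
    simp only [Finset.sum_neg_distrib] at h
    linarith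
  by_cases hαtop : α = ⊤
  · -- max-entropy case
    subst hαtop
    rw [renyiEntropy, renyiEntropy, if_neg hα1, if_neg hα1, if_pos rfl, if_pos rfl]
    obtain ⟨k0, hk0⟩ := hmupos
    have hbl : BddAbove (Set.range lam) := (Set.finite_range lam).bddAbove
    have hbm : BddAbove (Set.range mu) := (Set.finite_range mu).bddAbove
    have hmle : sSup (Set.range mu) ≤ sSup (Set.range lam) := by
      refine csSup_le ⟨mu k0, k0, rfl⟩ ?_
      rintro x ⟨k, rfl⟩
      rw [hmu k]
      calc ∑ i, D k i * lam i ≤ ∑ i, D k i * sSup (Set.range lam) :=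
            Finset.sum_le_sum fun i _ => mul_le_mul_of_nonneg_left
              (le_csSup hbl ⟨i, rfl⟩) (hD0 k i)
        _ = sSup (Set.range lam) := by rw [← Finset.sum_mul, hrow k, one_mul]
    have hmpos : 0 < sSup (Set.range mu) := lt_of_lt_of_le hk0 (le_csSup hbm ⟨k0, rfl⟩)
    exact neg_le_neg (Real.log_le_log hmpos hmle)
  · -- Rényi case, α ∉ {1, ∞}
    rw [renyiEntropy, renyiEntropy, if_neg hα1, if_neg hα1, if_neg hαtop, if_neg hαtop]
    set p := α.toReal with hp
    by_cases hα0 : α = 0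
    · -- rank case
      have hp0 : p = 0 := by rw [hp, hα0]; simp
      rw [hp0]
      have hg : ∀ x : ℝ, (if x = 0 then (0:ℝ) else x ^ (0:ℝ)) = if x = 0 then 0 else 1 := by
        intro x
        by_cases h : x = 0
        · rw [if_pos h, if_pos h]
        · rw [if_neg h, if_neg h, Real.rpow_zero]
      simp_rw [hg]
      rw [sub_zero, inv_one, one_mul, one_mul]
      -- key counting inequality
      have hkey : (∑ i, if lam i = 0 then (0:ℝ) else 1) ≤ ∑ k, if mu k = 0 then (0:ℝ) else 1 := by
        have h1 : ∀ k, ∑ i, D k i * (if lam i = 0 then (0:ℝ) else 1)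
            ≤ (if mu k = 0 then (0:ℝ) else 1) := by
          intro k
          by_cases hk : mu k = 0
          · rw [if_pos hk]
            have hz : ∀ i ∈ Finset.univ, D k i * lam i = 0 := by
              have := (Finset.sum_eq_zero_iff_of_nonneg
                (fun i _ => mul_nonneg (hD0 k i) (hlam i))).mp (by rw [← hmu k, hk])
              exact this
            refine le_of_eq (Finset.sum_eq_zero fun i _ => ?_)
            by_cases hi : lam i = 0
            · rw [if_pos hi, mul_zero]
            · rw [if_neg hi, mul_one]
              have := hz i (Finset.mem_univ i)
              rcases mul_eq_zero.mp this with h | h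
              · exact h
              · exact absurd h hi
          · rw [if_neg hk]
            calc ∑ i, D k i * (if lam i = 0 then (0:ℝ) else 1)
                ≤ ∑ i, D k i := Finset.sum_le_sum fun i _ => by
                  by_cases hi : lam i = 0
                  · rw [if_pos hi, mul_zero]; exact hD0 k i
                  · rw [if_neg hi, mul_one]
              _ = 1 := hrow k
        calc (∑ i, if lam i = 0 then (0:ℝ) else 1)
            = ∑ i, (∑ k, D k i) * (if lam i = 0 then (0:ℝ) else 1) := by
              refine Finset.sum_congr rfl fun i _ => ?_
              rw [hcol i, one_mul]
          _ = ∑ k, ∑ i, D k i * (if lam i = 0 then (0:ℝ) else 1) := by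
              simp_rw [Finset.sum_mul]
              exact Finset.sum_comm
          _ ≤ ∑ k, if mu k = 0 then (0:ℝ) else 1 := Finset.sum_le_sum fun k _ => h1 k
      have hposl : 0 < ∑ i, if lam i = 0 then (0:ℝ) else 1 := by
        obtain ⟨i0, hi0⟩ := hlampos
        refine Finset.sum_pos' (fun i _ => by positivity) ⟨i0, Finset.mem_univ i0, ?_⟩
        rw [if_neg (ne_of_gt hi0)]
        norm_num
      exact Real.log_le_log hposl hkey
    · -- 0 < p, p ≠ 1, p finite
      have hppos : 0 < p := ENNReal.toReal_pos hα0 hαtop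
      have hpne1 : p ≠ 1 := fun h => hα1 ((ENNReal.toReal_eq_one_iff α).mp h)
      have hite : ∀ x : ℝ, 0 ≤ x → (if x = 0 then (0:ℝ) else x ^ p) = x ^ p := by
        intro x hx
        by_cases h : x = 0
        · rw [if_pos h, h, Real.zero_rpow (ne_of_gt hppos)]
        · rw [if_neg h]
      rw [Finset.sum_congr rfl fun i _ => hite (lam i) (hlam i),
        Finset.sum_congr rfl fun k _ => hite (mu k) (hmu0 k)]
      have hposl : 0 < ∑ i, lam i ^ p := by
        obtain ⟨i0, hi0⟩ := hlampos
        exact Finset.sum_pos' (fun i _ => Real.rpow_nonneg (hlam i) p)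
          ⟨i0, Finset.mem_univ i0, Real.rpow_pos_of_pos hi0 p⟩
      have hposm : 0 < ∑ k, mu k ^ p := by
        obtain ⟨k0, hk0⟩ := hmupos
        exact Finset.sum_pos' (fun k _ => Real.rpow_nonneg (hmu0 k) p)
          ⟨k0, Finset.mem_univ k0, Real.rpow_pos_of_pos hk0 p⟩
      rcases lt_or_gt_of_ne hpne1 with hlt | hgt
      · -- concave regime
        have hcc : ConcaveOn ℝ (Set.Ici 0) fun x : ℝ => x ^ p :=
          Real.concaveOn_rpow (le_of_lt hppos) (le_of_lt hlt)
        have h := jensen_transfer hlam hD0 hrow hcol hmu hcc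
        have hlog := Real.log_le_log hposl h
        have hc : (0:ℝ) ≤ (1 - p)⁻¹ := by
          rw [inv_nonneg]
          linarith
        exact mul_le_mul_of_nonneg_left hlog hc
      · -- convex regime
        have hcc : ConvexOn ℝ (Set.Ici 0) fun x : ℝ => x ^ p :=
          convexOn_rpow (le_of_lt hgt)
        have h := jensen_transfer_convex hlam hD0 hrow hcol hmu hcc
        have hlog := Real.log_le_log hposm h
        have hc : (1 - p)⁻¹ ≤ 0 := by
          apply inv_nonpos.mpr
          linarith
        exact mul_le_mul_of_nonpos_left hlog hc

end Renyi


/-! ### Trace equals sum of eigenvalues -/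

lemma trace_eq_sum_eig {ι : Type*} [Fintype ι] [DecidableEq ι]
    {A : Matrix ι ι ℂ} (hA : A.IsHermitian) :
    A.trace = ((∑ i, hA.eigenvalues i : ℝ) : ℂ) := by
  have hU2 : star (hA.eigenvectorUnitary : Matrix ι ι ℂ) *
      (hA.eigenvectorUnitary : Matrix ι ι ℂ) = 1 :=
    mem_unitaryGroup_iff'.mp hA.eigenvectorUnitary.prop
  calc A.trace
      = (∑ i, (hA.eigenvalues i : ℂ) •
          outerP (hA.eigenvectorUnitary : Matrix ι ι ℂ) i).trace := by
        rw [← spectral_sum hA]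
    _ = ∑ i, (hA.eigenvalues i : ℂ) *
          (outerP (hA.eigenvectorUnitary : Matrix ι ι ℂ) i).trace := by
        rw [Matrix.trace_sum]
        exact Finset.sum_congr rfl fun i _ => by rw [Matrix.trace_smul, smul_eq_mul]
    _ = ∑ i, (hA.eigenvalues i : ℂ) := by
        refine Finset.sum_congr rfl fun i _ => ?_
        rw [outerP_trace hU2, mul_one]
    _ = ((∑ i, hA.eigenvalues i : ℝ) : ℂ) := by push_cast; rfl

/-- **Entropy increase under convolution:** for any three `n`-qubit states and
any `α ∈ [0,∞]`, `S_α(⊠₃(ρ₁⊗ρ₂⊗ρ₃)) ≥ max {S_α(ρ₁), S_α(ρ₂), S_α(ρ₃)}`. -/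
theorem renyi_qconv_ge (n : ℕ) (α : ℝ≥0∞)
    (ρ : Fin 3 → Matrix (Fin n → ZMod 2) (Fin n → ZMod 2) ℂ)
    (hρ : ∀ i, IsState (ρ i))
    (hconv : (qconv 2 ρ).IsHermitian) (j : Fin 3) :
    renyiEntropy α ((hρ j).1.isHermitian.eigenvalues) ≤
      renyiEntropy α hconv.eigenvalues := by
  have hpsd_all : ∀ i, (ρ i).PosSemidef := fun i => (hρ i).1
  have htr_all : ∀ i, (ρ i).trace = 1 := fun i => (hρ i).2
  have hchan_eq : chan ρ j (ρ j) = qconv 2 ρ := by rw [chan, Function.update_eq_self]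
  have htrΦ : ∀ M : Matrix (Fin n → ZMod 2) (Fin n → ZMod 2) ℂ, M.PosSemidef →
      (chan ρ j M).trace = M.trace := by
    intro M _
    rw [chan_trace, Finset.prod_congr rfl fun i _ => htr_all i,
      Finset.prod_const_one, mul_one]
  obtain ⟨D, hD0, hrow, hcol, hmu⟩ := exists_DS (hρ j).1 hconv (chan ρ j)
    (fun c M => chan_sum ρ j c M) (fun M hM => chan_posSemidef hpsd_all j hM) htrΦ
    (chan_one fun i _ => htr_all i) hchan_eq
  have hlam0 : ∀ i, 0 ≤ (hρ j).1.isHermitian.eigenvalues i := fun i =>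
    (hρ j).1.eigenvalues_nonneg i
  have hlamsum : ∑ i, (hρ j).1.isHermitian.eigenvalues i = 1 := by
    have h := trace_eq_sum_eig (hρ j).1.isHermitian
    exact_mod_cast ((htr_all j).symm.trans h).symm
  exact renyi_mono α hlam0 hlamsum hD0 hrow hcol hmu
end
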